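/- Let φ be a 3CNF formula with clauses C₁,…,C_m over variables var₁,…,var_n, and suppose ξ=⟨f₁,f₂,f₃,f₄⟩ is a positional distributed strategy on 𝒢(φ) that is reachability-winning from (S,S,S,S) to (var₁,var₁,var₁,OK₀). Then for every clause Cᵢ with literal variables var_{1ᵢ},var_{2ᵢ},var_{3ᵢ}, the combined local-strategy choices (f₁(var_{1ᵢ}),f₂(var_{2ᵢ}),f₃(var_{3ᵢ}))∈{T,F}³ form an assignment of the three variables of Cᵢ that makes Cᵢ true; that is, the player-1 edge leaving (f₁(var_{1ᵢ}),f₂(var_{2ᵢ}),f₃(var_{3ᵢ}),v_{i,1}) is a type-3(a) edge into the target (var₁,var₁,var₁,OK₀). -/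
import Mathlib


namespace DGame

/-- A literal: a variable index together with a sign (`true` = positive literal). -/
abbrev Lit (n : ℕ) := Fin n × Bool

/-- A 3CNF clause: three literals. -/
abbrev Clause (n : ℕ) := Lit n × Lit n × Lit n

/-- A 3CNF formula `φ` with `m` clauses `C₁,…,C_m` over `n` variables `var₁,…,var_n`. -/
abbrev CNF (m n : ℕ) := Fin m → Clause n

/-- Evaluation of a clause under a truth assignment. -/
def Clause.eval {n : ℕ} (A : Fin n → Bool) (c : Clause n) : Bool :=
  (A c.1.1 == c.1.2) || (A c.2.1.1 == c.2.1.2) || (A c.2.2.1 == c.2.2.2)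

/-- `A` is a satisfying truth assignment for `φ`. -/
def CNF.Sat {m n : ℕ} (φ : CNF m n) (A : Fin n → Bool) : Prop :=
  ∀ i, Clause.eval A (φ i) = true

/-- Truth of clause `c` under an assignment `(a₁,a₂,a₃) ∈ {T,F}³` of its three
(literal positions') variables. -/
def Clause.evalTriple {n : ℕ} (c : Clause n) (a : Bool × Bool × Bool) : Bool :=
  (a.1 == c.1.2) || (a.2.1 == c.2.1.2) || (a.2.2 == c.2.2.2)

/-- Vertices of the local games `G₁, G₂, G₃`:
player-0 vertices `var j`, player-1 vertices `S`, `T j`, `F j`. -/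
inductive LV (n : ℕ) : Type
  | var (j : Fin n)
  | S
  | T (j : Fin n)
  | F (j : Fin n)
  deriving DecidableEq, Fintype

/-- Player-0 vertices of `G₁, G₂, G₃`. -/
def LV.IsP0 {n : ℕ} : LV n → Prop
  | .var _ => True
  | _ => False

/-- Local edges of `G₁, G₂, G₃`: `(var j, T j)` and `(var j, F j)`. -/
inductive LE {n : ℕ} : LV n → LV n → Prop
  | toT (j : Fin n) : LE (.var j) (.T j)
  | toF (j : Fin n) : LE (.var j) (.F j)

/-- Vertices of the local game `G₄`:
player-0 vertices `OK₀, NO₀, v_{j,0}`, player-1 vertices `S, OK₁, NO₁, v_{j,1}`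
(for `j = 1..m+n`). -/
inductive LV4 (m n : ℕ) : Type
  | OK0
  | NO0
  | v0 (j : Fin (m + n))
  | S
  | OK1
  | NO1
  | v1 (j : Fin (m + n))
  deriving DecidableEq, Fintype

/-- Player-0 vertices of `G₄`. -/
def LV4.IsP0 {m n : ℕ} : LV4 m n → Prop
  | .OK0 => True
  | .NO0 => True
  | .v0 _ => True
  | _ => False

/-- Local edges of `G₄`: `(v_{j,0}, v_{j,1})`, `(OK₀, OK₁)`, `(NO₀, NO₁)`. -/
inductive LE4 {m n : ℕ} : LV4 m n → LV4 m n → Prop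
  | mid (j : Fin (m + n)) : LE4 (.v0 j) (.v1 j)
  | ok : LE4 .OK0 .OK1
  | no : LE4 .NO0 .NO1

/-- Global vertices of the distributed game `𝒢(φ)`. -/
abbrev GV (m n : ℕ) := LV n × LV n × LV n × LV4 m n

/-- `𝒱₁`: global player-1 vertices (all components are local player-1 vertices).
All other global vertices form `𝒱₀`. -/
def GV.IsP1 {m n : ℕ} (x : GV m n) : Prop :=
  ¬ x.1.IsP0 ∧ ¬ x.2.1.IsP0 ∧ ¬ x.2.2.1.IsP0 ∧ ¬ x.2.2.2.IsP0

/-- The vertex `T j` or `F j` of `G₁,G₂,G₃` according to a boolean. -/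
def tf {n : ℕ} (a : Bool) (j : Fin n) : LV n := if a then .T j else .F j

/-- The initial state `(S,S,S,S)`. -/
def start (m n : ℕ) : GV m n := (.S, .S, .S, .S)

/-- The target state `(var₁, var₁, var₁, OK₀)`. -/
def tgt (m n : ℕ) [NeZero n] : GV m n := (.var 0, .var 0, .var 0, .OK0)

/-- The losing state `(var₁, var₁, var₁, NO₀)`. -/
def sink (m n : ℕ) [NeZero n] : GV m n := (.var 0, .var 0, .var 0, .NO0)

/-- The prescribed player-1 edges of the reduction game `𝒢(φ)` (types 1–5).
For the clause `Cᵢ`, the index of `v_i` in `G₄` is `i.castAdd n`; for the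
variable `var_j` the index of `v_{m+j}` is `Fin.natAdd m j`. -/
inductive E1 {m n : ℕ} [NeZero n] (φ : CNF m n) : GV m n → GV m n → Prop
  /-- (type 1) intention to check satisfaction of clause `Cᵢ`. -/
  | type1 (i : Fin m) :
      E1 φ (start m n)
        (.var (φ i).1.1, .var (φ i).2.1.1, .var (φ i).2.2.1, .v0 (i.castAdd n))
  /-- (type 2) intention to check consistency of variable `var_j`. -/
  | type2 (j : Fin n) :
      E1 φ (start m n) (.var j, .var j, .var j, .v0 (Fin.natAdd m j))
  /-- (type 3a) an assignment making clause `Cᵢ` true leads to the target. -/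
  | type3a (i : Fin m) (a : Bool × Bool × Bool)
      (h : Clause.evalTriple (φ i) a = true) :
      E1 φ (tf a.1 (φ i).1.1, tf a.2.1 (φ i).2.1.1, tf a.2.2 (φ i).2.2.1,
            .v1 (i.castAdd n)) (tgt m n)
  /-- (type 3b) an assignment making clause `Cᵢ` false leads to `NO₀`. -/
  | type3b (i : Fin m) (a : Bool × Bool × Bool)
      (h : Clause.evalTriple (φ i) a = false) :
      E1 φ (tf a.1 (φ i).1.1, tf a.2.1 (φ i).2.1.1, tf a.2.2 (φ i).2.2.1,
            .v1 (i.castAdd n)) (sink m n)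
  /-- (type 4a) consistent choices `(T,T,T)` or `(F,F,F)` lead to the target. -/
  | type4a (j : Fin n) (a : Bool) :
      E1 φ (tf a j, tf a j, tf a j, .v1 (Fin.natAdd m j)) (tgt m n)
  /-- (type 4b) the six mixed combinations lead to `NO₀`. -/
  | type4b (j : Fin n) (a : Bool × Bool × Bool)
      (h : ¬ (a.1 = a.2.1 ∧ a.2.1 = a.2.2)) :
      E1 φ (tf a.1 j, tf a.2.1 j, tf a.2.2 j, .v1 (Fin.natAdd m j)) (sink m n)
  /-- (type 5) continuous execution, `OK₁` side. -/
  | type5ok (j : Fin n) (a : Bool × Bool × Bool) :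
      E1 φ (tf a.1 j, tf a.2.1 j, tf a.2.2 j, .OK1) (tgt m n)
  /-- (type 5) continuous execution, `NO₁` side. -/
  | type5no (j : Fin n) (a : Bool × Bool × Bool) :
      E1 φ (tf a.1 j, tf a.2.1 j, tf a.2.2 j, .NO1) (sink m n)

/-- One-component step for player 0 in `G₁,G₂,G₃`: a player-0 component moves
along a local edge, a player-1 component stays put. -/
def lstep {n : ℕ} : LV n → LV n → Prop
  | .var j, v' => LE (.var j) v'
  | v, v' => v' = v

/-- One-component step for player 0 in `G₄`. -/
def lstep4 {m n : ℕ} : LV4 m n → LV4 m n → Prop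
  | .OK0, v' => LE4 .OK0 v'
  | .NO0, v' => LE4 .NO0 v'
  | .v0 j, v' => LE4 (.v0 j) v'
  | v, v' => v' = v

/-- The global edge relation `ℰ` of `𝒢(φ)`: from a player-1 vertex the
prescribed edges, from a player-0 vertex the componentwise moves. -/
def GE {m n : ℕ} [NeZero n] (φ : CNF m n) (x y : GV m n) : Prop :=
  (x.IsP1 ∧ E1 φ x y) ∨
  (¬ x.IsP1 ∧ lstep x.1 y.1 ∧ lstep x.2.1 y.2.1 ∧ lstep x.2.2.1 y.2.2.1 ∧
    lstep4 x.2.2.2 y.2.2.2)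

/-- A positional distributed strategy `ξ = ⟨f₁,f₂,f₃,f₄⟩` for player 0:
each `fᵢ` maps player-0 local vertices along local edges. -/
structure Strat (m n : ℕ) where
  f1 : LV n → LV n
  f2 : LV n → LV n
  f3 : LV n → LV n
  f4 : LV4 m n → LV4 m n
  h1 : ∀ j : Fin n, LE (.var j) (f1 (.var j))
  h2 : ∀ j : Fin n, LE (.var j) (f2 (.var j))
  h3 : ∀ j : Fin n, LE (.var j) (f3 (.var j))
  h4 : ∀ v : LV4 m n, v.IsP0 → LE4 v (f4 v)

/-- `x` has a successor in `𝒢(φ)`. -/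
def HasSucc {m n : ℕ} [NeZero n] (φ : CNF m n) (x : GV m n) : Prop :=
  ∃ y, GE φ x y

/-- A (maximal) play of `𝒢(φ)`, encoded as an infinite sequence which follows
edges of the game and stutters forever once a dead-end vertex is reached. -/
def IsPlay {m n : ℕ} [NeZero n] (φ : CNF m n) (π : ℕ → GV m n) : Prop :=
  ∀ k, (HasSucc φ (π k) → GE φ (π k) (π (k + 1))) ∧
       (¬ HasSucc φ (π k) → π (k + 1) = π k)

/-- The play `π` is consistent with the positional distributed strategy `ξ`:
at every player-0 vertex, every component in a local player-0 position moves
as prescribed by the corresponding local strategy. -/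
def Consistent {m n : ℕ} (ξ : Strat m n) (π : ℕ → GV m n) : Prop :=
  ∀ k, ¬ (π k).IsP1 →
    ((π k).1.IsP0 → (π (k + 1)).1 = ξ.f1 (π k).1) ∧
    ((π k).2.1.IsP0 → (π (k + 1)).2.1 = ξ.f2 (π k).2.1) ∧
    ((π k).2.2.1.IsP0 → (π (k + 1)).2.2.1 = ξ.f3 (π k).2.2.1) ∧
    ((π k).2.2.2.IsP0 → (π (k + 1)).2.2.2 = ξ.f4 (π k).2.2.2)

/-- `ξ` is reachability-winning from `init` to `goal`: every play starting at
`init` and consistent with `ξ` visits `goal`. -/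
def Winning {m n : ℕ} [NeZero n] (φ : CNF m n) (ξ : Strat m n)
    (init goal : GV m n) : Prop :=
  ∀ π : ℕ → GV m n, IsPlay φ π → Consistent ξ π → π 0 = init → ∃ k, π k = goal


section Aux

variable {m n : ℕ}

lemma LE_var {j : Fin n} {v : LV n} (h : LE (.var j) v) : v = .T j ∨ v = .F j := by
  cases h
  · exact Or.inl rfl
  · exact Or.inr rfl

lemma LE4_v0 {j : Fin (m + n)} {v : LV4 m n} (h : LE4 (.v0 j) v) : v = .v1 j := by
  cases h; rfl

lemma LE4_NO0 {v : LV4 m n} (h : LE4 .NO0 v) : v = .NO1 := by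
  cases h; rfl

lemma strat_tf (f : LV n → LV n) (hf : ∀ j : Fin n, LE (.var j) (f (.var j)))
    (j : Fin n) :
    f (.var j) = tf (if f (.var j) = LV.T j then true else false) j := by
  rcases LE_var (hf j) with h | h <;> rw [h] <;> simp [tf]

lemma tf_not_p0 (b : Bool) (j : Fin n) : ¬ (tf b j).IsP0 := by
  cases b <;> simp [tf, LV.IsP0]

lemma f4_v0 (ξ : Strat m n) (j : Fin (m + n)) : ξ.f4 (.v0 j) = .v1 j :=
  LE4_v0 (ξ.h4 _ trivial)

lemma f4_NO0 (ξ : Strat m n) : ξ.f4 .NO0 = .NO1 :=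
  LE4_NO0 (ξ.h4 _ trivial)

/-- The intermediate vertex visited from `sink` under the strategy. -/
def mid [NeZero n] (ξ : Strat m n) : GV m n :=
  (ξ.f1 (.var 0), ξ.f2 (.var 0), ξ.f3 (.var 0), ξ.f4 .NO0)

/-- The play where player 1 tests clause `Cᵢ` and player 0 follows `ξ`,
assuming the strategy's assignment falsifies `Cᵢ` (so the play goes to `sink`
and loops there forever). -/
def play [NeZero n] (φ : CNF m n) (ξ : Strat m n) (i : Fin m) : ℕ → GV m n
  | 0 => start m n
  | 1 => (.var (φ i).1.1, .var (φ i).2.1.1, .var (φ i).2.2.1, .v0 (i.castAdd n))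
  | 2 => (ξ.f1 (.var (φ i).1.1), ξ.f2 (.var (φ i).2.1.1),
          ξ.f3 (.var (φ i).2.2.1), ξ.f4 (.v0 (i.castAdd n)))
  | (k+3) => if k % 2 = 0 then sink m n else mid ξ

lemma start_isP1 [NeZero n] : (start m n).IsP1 := by
  refine ⟨?_, ?_, ?_, ?_⟩ <;> simp [start, LV.IsP0, LV4.IsP0]

lemma mid_isP1 [NeZero n] (ξ : Strat m n) : (mid ξ).IsP1 := by
  refine ⟨?_, ?_, ?_, ?_⟩ <;> simp only [mid]
  · rw [strat_tf ξ.f1 ξ.h1 0]; exact tf_not_p0 _ _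
  · rw [strat_tf ξ.f2 ξ.h2 0]; exact tf_not_p0 _ _
  · rw [strat_tf ξ.f3 ξ.h3 0]; exact tf_not_p0 _ _
  · rw [f4_NO0]; simp [LV4.IsP0]

lemma sink_not_isP1 [NeZero n] : ¬ (sink m n).IsP1 := fun h => h.1 trivial

end Aux

/-- If `ξ = ⟨f₁,f₂,f₃,f₄⟩` is a positional distributed
strategy on `𝒢(φ)` which is reachability-winning from `(S,S,S,S)` to
`(var₁,var₁,var₁,OK₀)`, then for every clause `Cᵢ` the combined local-strategy
choices at the three literal variables form an assignment making `Cᵢ` true;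
i.e. the player-1 edge leaving `(f₁(var_{1ᵢ}), f₂(var_{2ᵢ}), f₃(var_{3ᵢ}),
v_{i,1})` is a type-3(a) edge into the target `(var₁,var₁,var₁,OK₀)`. -/
theorem winning_strategy_clause_choices_satisfy_clause
    {m n : ℕ} [NeZero n] (φ : CNF m n) (ξ : Strat m n)
    (hwin : Winning φ ξ (start m n) (tgt m n)) :
    ∀ i : Fin m,
      Clause.evalTriple (φ i)
        (if ξ.f1 (.var (φ i).1.1) = LV.T (φ i).1.1 then true else false,
         if ξ.f2 (.var (φ i).2.1.1) = LV.T (φ i).2.1.1 then true else false,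
         if ξ.f3 (.var (φ i).2.2.1) = LV.T (φ i).2.2.1 then true else false)
        = true ∧
      E1 φ (ξ.f1 (.var (φ i).1.1), ξ.f2 (.var (φ i).2.1.1),
            ξ.f3 (.var (φ i).2.2.1), .v1 (i.castAdd n)) (tgt m n) := by
  intro i
  have hf1 := strat_tf ξ.f1 ξ.h1 (φ i).1.1
  have hf2 := strat_tf ξ.f2 ξ.h2 (φ i).2.1.1
  have hf3 := strat_tf ξ.f3 ξ.h3 (φ i).2.2.1
  set a1 := (if ξ.f1 (.var (φ i).1.1) = LV.T (φ i).1.1 then true else false) with ha1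
  set a2 := (if ξ.f2 (.var (φ i).2.1.1) = LV.T (φ i).2.1.1 then true else false) with ha2
  set a3 := (if ξ.f3 (.var (φ i).2.2.1) = LV.T (φ i).2.2.1 then true else false) with ha3
  suffices hE : Clause.evalTriple (φ i) (a1, a2, a3) = true by
    refine ⟨hE, ?_⟩
    rw [hf1, hf2, hf3]
    exact E1.type3a i (a1, a2, a3) hE
  by_contra hE
  have hE' : Clause.evalTriple (φ i) (a1, a2, a3) = false := by
    simpa using hE
  -- the bad play
  have hb1 := strat_tf ξ.f1 ξ.h1 (0 : Fin n)
  have hb2 := strat_tf ξ.f2 ξ.h2 (0 : Fin n)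
  have hb3 := strat_tf ξ.f3 ξ.h3 (0 : Fin n)
  have hp2P1 : (play φ ξ i 2).IsP1 := by
    refine ⟨?_, ?_, ?_, ?_⟩ <;> simp only [play]
    · rw [hf1]; exact tf_not_p0 _ _
    · rw [hf2]; exact tf_not_p0 _ _
    · rw [hf3]; exact tf_not_p0 _ _
    · rw [f4_v0]; simp [LV4.IsP0]
  have hp3 : play φ ξ i 3 = sink m n := rfl
  have hedge : ∀ k, GE φ (play φ ξ i k) (play φ ξ i (k + 1)) := by
    intro k
    match k with
    | 0 => exact Or.inl ⟨start_isP1, E1.type1 i⟩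
    | 1 =>
      refine Or.inr ⟨fun h => h.1 trivial, ξ.h1 _, ξ.h2 _, ξ.h3 _, ξ.h4 _ trivial⟩
    | 2 =>
      refine Or.inl ⟨hp2P1, ?_⟩
      rw [hp3]
      show E1 φ (play φ ξ i 2) (sink m n)
      simp only [play]
      rw [hf1, hf2, hf3, f4_v0]
      exact E1.type3b i (a1, a2, a3) hE'
    | (k+3) =>
      rcases Nat.even_or_odd k with he | ho
      · have hk0 : k % 2 = 0 := Nat.even_iff.mp he
        have h1 : play φ ξ i (k + 3) = sink m n := by simp [play, hk0]
        have h2 : play φ ξ i (k + 3 + 1) = mid ξ := by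
          have hk1 : (k + 1) % 2 = 1 := by omega
          show play φ ξ i ((k + 1) + 3) = mid ξ
          simp [play, hk1]
        rw [h1, h2]
        exact Or.inr ⟨sink_not_isP1, ξ.h1 _, ξ.h2 _, ξ.h3 _, ξ.h4 _ trivial⟩
      · have hk1 : k % 2 = 1 := Nat.odd_iff.mp ho
        have h1 : play φ ξ i (k + 3) = mid ξ := by simp [play, hk1]
        have h2 : play φ ξ i (k + 3 + 1) = sink m n := by
          have hk0 : (k + 1) % 2 = 0 := by omega
          show play φ ξ i ((k + 1) + 3) = sink m n
          simp [play, hk0]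
        rw [h1, h2]
        refine Or.inl ⟨mid_isP1 ξ, ?_⟩
        show E1 φ (mid ξ) (sink m n)
        simp only [mid]
        rw [hb1, hb2, hb3, f4_NO0]
        exact E1.type5no 0 (_, _, _)
  have hplay : IsPlay φ (play φ ξ i) :=
    fun k => ⟨fun _ => hedge k, fun h => absurd ⟨_, hedge k⟩ h⟩
  have hcons : Consistent ξ (play φ ξ i) := by
    intro k hk
    match k with
    | 0 => exact absurd start_isP1 hk
    | 1 => exact ⟨fun _ => rfl, fun _ => rfl, fun _ => rfl, fun _ => rfl⟩
    | 2 => exact absurd hp2P1 hk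
    | (k+3) =>
      rcases Nat.even_or_odd k with he | ho
      · have hk0 : k % 2 = 0 := Nat.even_iff.mp he
        have h1 : play φ ξ i (k + 3) = sink m n := by simp [play, hk0]
        have h2 : play φ ξ i (k + 3 + 1) = mid ξ := by
          have hk1 : (k + 1) % 2 = 1 := by omega
          show play φ ξ i ((k + 1) + 3) = mid ξ
          simp [play, hk1]
        rw [h1, h2]
        exact ⟨fun _ => rfl, fun _ => rfl, fun _ => rfl, fun _ => rfl⟩
      · have hk1 : k % 2 = 1 := Nat.odd_iff.mp ho
        have h1 : play φ ξ i (k + 3) = mid ξ := by simp [play, hk1]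
        rw [h1] at hk
        exact absurd (mid_isP1 ξ) hk
  obtain ⟨k, hk⟩ := hwin (play φ ξ i) hplay hcons rfl
  match k, hk with
  | 0, hk => simp [play, start, tgt] at hk
  | 1, hk => simp [play, tgt] at hk
  | 2, hk =>
    have h4 := congrArg (fun x : GV m n => x.2.2.2) hk
    simp only [play, tgt] at h4
    rw [f4_v0] at h4
    exact absurd h4 (by simp)
  | (k+3), hk =>
    rcases Nat.even_or_odd k with he | ho
    · have hk0 : k % 2 = 0 := Nat.even_iff.mp he
      have h1 : play φ ξ i (k + 3) = sink m n := by simp [play, hk0]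
      rw [h1] at hk
      simp [sink, tgt] at hk
    · have hk1 : k % 2 = 1 := Nat.odd_iff.mp ho
      have h1 : play φ ξ i (k + 3) = mid ξ := by simp [play, hk1]
      rw [h1] at hk
      have h4 := congrArg (fun x : GV m n => x.2.2.2) hk
      simp only [mid, tgt] at h4
      rw [f4_NO0] at h4
      exact absurd h4 (by simp)

end DGame
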